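/- Let (Y,d) be a separable metric space, let μ be a Borel probability measure on Y, and let x ∈ Y be such that μ(B(x,ρ)) > 0 for every ρ > 0 and liminf_{ρ→0⁺} (log μ(B(x,ρ)))/(log ρ) > 1. Then the function a ↦ 1/d(x,a) is μ-integrable, i.e. ∫_Y 1/d(x,a) dμ(a) < ∞ (in particular μ({x}) = 0, so the integrand is defined μ-almost everywhere). -/

import Mathlib

open MeasureTheory Metric Filter Topology

private lemma aux_pow_rpow (x : ℝ) (hx : 0 ≤ x) (y : ℝ) (n : ℕ) :
    (x ^ n) ^ y = (x ^ y) ^ n := by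
  rw [← Real.rpow_natCast x n, ← Real.rpow_mul hx, mul_comm, Real.rpow_mul hx,
    Real.rpow_natCast]

/-- Part (i) of Contreras' lemma: if the lower local dimension of `μ` at `x`
exceeds 1, then `a ↦ 1 / dist x a` is `μ`-integrable (and `μ {x} = 0`). -/
theorem stmt0 {Y : Type*} [MetricSpace Y] [TopologicalSpace.SeparableSpace Y]
    [MeasurableSpace Y] [BorelSpace Y]
    (μ : Measure Y) [IsProbabilityMeasure μ] (x : Y)
    (hpos : ∀ ρ : ℝ, 0 < ρ → 0 < μ (ball x ρ))
    (hdim : 1 < Filter.liminf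
      (fun ρ : ℝ => Real.log (μ (ball x ρ)).toReal / Real.log ρ) (𝓝[>] (0:ℝ))) :
    μ {x} = 0 ∧ Integrable (fun a => 1 / dist x a) μ := by
  obtain ⟨c, hc1, hcl⟩ := exists_between hdim
  have hc0 : (0:ℝ) < c := lt_trans one_pos hc1
  have hbdd : IsBoundedUnder (· ≥ ·) (𝓝[>] (0:ℝ))
      (fun ρ : ℝ => Real.log (μ (ball x ρ)).toReal / Real.log ρ) := by
    refine ⟨0, ?_⟩
    rw [eventually_map]
    filter_upwards [Ioo_mem_nhdsGT_of_mem (Set.left_mem_Ico.2 one_pos)] with ρ hρ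
    have h1 : Real.log (μ (ball x ρ)).toReal ≤ 0 := by
      apply Real.log_nonpos ENNReal.toReal_nonneg
      have := ENNReal.toReal_mono (ENNReal.one_ne_top) (prob_le_one (μ := μ) (s := ball x ρ))
      simpa using this
    have h2 : Real.log ρ ≤ 0 := (Real.log_neg hρ.1 hρ.2).le
    exact div_nonneg_iff.mpr (Or.inr ⟨h1, h2⟩)
  have hev : ∀ᶠ ρ in 𝓝[>] (0:ℝ),
      (c < Real.log (μ (ball x ρ)).toReal / Real.log ρ) ∧ ρ ∈ Set.Ioo (0:ℝ) 1 :=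
    (eventually_lt_of_lt_liminf hcl hbdd).and
      (Ioo_mem_nhdsGT_of_mem (Set.left_mem_Ico.2 one_pos))
  obtain ⟨ε, hε, hsub⟩ := mem_nhdsGT_iff_exists_Ioo_subset.mp hev
  rw [Set.mem_Ioi] at hε
  -- key estimate
  have key : ∀ ρ ∈ Set.Ioo (0:ℝ) ε, μ (ball x ρ) ≤ ENNReal.ofReal (ρ ^ c) := by
    intro ρ hρ
    obtain ⟨hlt, hρ0, hρ1⟩ := hsub hρ
    set m := (μ (ball x ρ)).toReal with hm
    have hm0 : 0 < m := ENNReal.toReal_pos (hpos ρ hρ0).ne' (measure_ne_top μ _)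
    have hlogρ : Real.log ρ < 0 := Real.log_neg hρ0 hρ1
    have h3 : Real.log m < c * Real.log ρ := (lt_div_iff_of_neg hlogρ).mp hlt
    rw [← Real.log_rpow hρ0 c] at h3
    have h4 : m < ρ ^ c := (Real.log_lt_log_iff hm0 (Real.rpow_pos_of_pos hρ0 c)).mp h3
    calc μ (ball x ρ) = ENNReal.ofReal m := (ENNReal.ofReal_toReal (measure_ne_top μ _)).symm
      _ ≤ ENNReal.ofReal (ρ ^ c) := ENNReal.ofReal_le_ofReal h4.le
  set ρ₁ : ℝ := ε / 2 with hρ₁def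
  have hρ₁ : 0 < ρ₁ := by positivity
  have hρ₁ε : ρ₁ < ε := by
    rw [hρ₁def]; linarith
  set r : ℕ → ℝ := fun n => ρ₁ * (2:ℝ)⁻¹ ^ n with hrdef
  have hr0 : ∀ n, 0 < r n := fun n => mul_pos hρ₁ (pow_pos (by norm_num) n)
  have hrle : ∀ n, r n ≤ ρ₁ := by
    intro n
    have : (2:ℝ)⁻¹ ^ n ≤ 1 := pow_le_one₀ (by norm_num) (by norm_num)
    calc r n = ρ₁ * (2:ℝ)⁻¹ ^ n := rfl
      _ ≤ ρ₁ * 1 := by nlinarith [hρ₁]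
      _ = ρ₁ := mul_one _
  have hrIoo : ∀ n, r n ∈ Set.Ioo (0:ℝ) ε := fun n => ⟨hr0 n, lt_of_le_of_lt (hrle n) hρ₁ε⟩
  have hrtend : Tendsto r atTop (𝓝 0) := by
    have := (tendsto_pow_atTop_nhds_zero_of_lt_one (by norm_num : (0:ℝ) ≤ 2⁻¹)
      (by norm_num : (2:ℝ)⁻¹ < 1)).const_mul ρ₁
    simpa [hrdef] using this
  -- μ {x} = 0
  have hx0 : μ {x} = 0 := by
    have htt : Tendsto (fun n => ENNReal.ofReal (r n ^ c)) atTop (𝓝 0) := by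
      have h1 : Tendsto (fun n => (r n) ^ c) atTop (𝓝 0) := by
        have := (Real.continuousAt_rpow_const 0 c (Or.inr hc0.le)).tendsto.comp hrtend
        simpa [Real.zero_rpow hc0.ne', Function.comp_def] using this
      have := (ENNReal.continuous_ofReal.tendsto 0).comp h1
      simpa [Function.comp_def] using this
    have hle : ∀ n, μ {x} ≤ ENNReal.ofReal (r n ^ c) := by
      intro n
      refine le_trans (measure_mono ?_) (key (r n) (hrIoo n))
      exact Set.singleton_subset_iff.mpr (mem_ball_self (hr0 n))
    simpa using ge_of_tendsto' htt hle
  refine ⟨hx0, ?_⟩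
  have hdistm : Measurable fun a : Y => dist x a := (by fun_prop : Continuous fun a : Y => dist x a).measurable
  constructor
  · exact (measurable_const.div hdistm).aestronglyMeasurable
  rw [hasFiniteIntegral_iff_norm]
  have hnorm : ∀ a : Y, ENNReal.ofReal ‖1 / dist x a‖ = ENNReal.ofReal (1 / dist x a) := by
    intro a; rw [Real.norm_of_nonneg (by positivity)]
  rw [lintegral_congr hnorm]
  -- cover
  set A : ℕ → Set Y := fun n => ball x (r n) \ ball x (r (n+1)) with hAdef
  have hcover : (Set.univ : Set Y) ⊆ (ball x (r 0))ᶜ ∪ ({x} ∪ ⋃ n, A n) := by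
    intro a _
    by_cases h0 : a ∈ ball x (r 0)
    · right
      by_cases hax : a = x
      · left; exact hax ▸ rfl
      · right
        have hd0 : 0 < dist x a := dist_pos.2 (fun h => hax h.symm)
        have hex : ∃ n, r (n + 1) ≤ dist x a := by
          obtain ⟨n, hn⟩ := (hrtend.eventually_lt_const hd0).exists
          exact ⟨n, le_trans (by
            have : (2:ℝ)⁻¹ ^ (n+1) ≤ (2:ℝ)⁻¹ ^ n :=
              pow_le_pow_of_le_one (by norm_num) (by norm_num) (Nat.le_succ n)
            have := mul_le_mul_of_nonneg_left this hρ₁.le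
            simpa [hrdef] using this) hn.le⟩
        classical
        set n := Nat.find hex with hn
        have hub : r (n+1) ≤ dist x a := Nat.find_spec hex
        have hlb : dist x a < r n := by
          rcases Nat.eq_zero_or_pos n with h | h
          · rw [h]; rw [mem_ball'] at h0; exact h0
          · obtain ⟨k, hk⟩ := Nat.exists_eq_succ_of_ne_zero h.ne'
            have := Nat.find_min hex (by omega : k < n)
            rw [hk]
            exact lt_of_not_ge this
        refine Set.mem_iUnion.2 ⟨n, ⟨mem_ball'.2 hlb, fun hmem => ?_⟩⟩
        exact absurd (mem_ball'.1 hmem) (not_lt.2 hub)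
    · left; exact h0
  -- geometric data
  set q : ℝ := (2:ℝ)⁻¹ ^ (c - 1) with hqdef
  have hq0 : 0 ≤ q := (Real.rpow_pos_of_pos (by norm_num) _).le
  have hq1 : q < 1 := Real.rpow_lt_one (by norm_num) (by norm_num) (by linarith)
  -- per-annulus bound
  have hterm : ∀ n : ℕ, ∫⁻ a in A n, ENNReal.ofReal (1 / dist x a) ∂μ ≤
      ENNReal.ofReal ((2:ℝ) ^ c * ρ₁ ^ (c - 1)) * ENNReal.ofReal q ^ n := by
    intro n
    have hstep : ∫⁻ a in A n, ENNReal.ofReal (1 / dist x a) ∂μ ≤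
        ENNReal.ofReal (r (n+1))⁻¹ * ENNReal.ofReal (r n ^ c) := by
      calc ∫⁻ a in A n, ENNReal.ofReal (1 / dist x a) ∂μ
          ≤ ∫⁻ _ in A n, ENNReal.ofReal (r (n+1))⁻¹ ∂μ := by
            refine setLIntegral_mono measurable_const (fun a ha => ?_)
            refine ENNReal.ofReal_le_ofReal ?_
            rw [one_div]
            have : r (n+1) ≤ dist x a := by
              have := ha.2
              rw [mem_ball'] at this
              exact not_lt.mp this
            exact inv_anti₀ (hr0 (n+1)) this
        _ = ENNReal.ofReal (r (n+1))⁻¹ * μ (A n) := setLIntegral_const _ _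
        _ ≤ ENNReal.ofReal (r (n+1))⁻¹ * ENNReal.ofReal (r n ^ c) := by
            gcongr
            exact le_trans (measure_mono Set.diff_subset) (key (r n) (hrIoo n))
    refine le_trans hstep ?_
    rw [← ENNReal.ofReal_pow hq0, ← ENNReal.ofReal_mul (by positivity),
      ← ENNReal.ofReal_mul (by positivity)]
    refine ENNReal.ofReal_le_ofReal ?_
    -- real computation
    have hr2 : r n = 2 * r (n + 1) := by
      simp only [hrdef, pow_succ]
      ring
    have e1 : (r (n+1))⁻¹ * r n ^ c = (2:ℝ) ^ c * r (n+1) ^ (c - 1) := by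
      rw [hr2, Real.mul_rpow (by norm_num) (hr0 (n+1)).le,
        Real.rpow_sub (hr0 (n+1)), Real.rpow_one]
      field_simp
    rw [e1]
    have e2 : r (n+1) ^ (c-1) ≤ ρ₁ ^ (c-1) * q ^ n := by
      have h1 : r (n+1) ≤ ρ₁ * (2:ℝ)⁻¹ ^ n := by
        rw [hr2] at *
        have : (2:ℝ)⁻¹ ^ (n+1) ≤ (2:ℝ)⁻¹ ^ n :=
          pow_le_pow_of_le_one (by norm_num) (by norm_num) (Nat.le_succ n)
        calc r (n+1) = ρ₁ * (2:ℝ)⁻¹ ^ (n+1) := rfl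
          _ ≤ ρ₁ * (2:ℝ)⁻¹ ^ n := by nlinarith [hρ₁]
      calc r (n+1) ^ (c-1) ≤ (ρ₁ * (2:ℝ)⁻¹ ^ n) ^ (c-1) :=
            Real.rpow_le_rpow (hr0 (n+1)).le h1 (by linarith)
        _ = ρ₁ ^ (c-1) * ((2:ℝ)⁻¹ ^ n) ^ (c-1) :=
            Real.mul_rpow hρ₁.le (by positivity)
        _ = ρ₁ ^ (c-1) * q ^ n := by
            rw [aux_pow_rpow _ (by norm_num) _ n, hqdef]
    calc (2:ℝ) ^ c * r (n+1) ^ (c-1) ≤ (2:ℝ) ^ c * (ρ₁ ^ (c-1) * q ^ n) := by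
          have h2c : (0:ℝ) < (2:ℝ) ^ c := Real.rpow_pos_of_pos (by norm_num) c
          nlinarith [e2, h2c]
      _ = (2:ℝ) ^ c * ρ₁ ^ (c-1) * q ^ n := by ring
  -- assemble
  calc ∫⁻ a, ENNReal.ofReal (1 / dist x a) ∂μ
      = ∫⁻ a in Set.univ, ENNReal.ofReal (1 / dist x a) ∂μ := by rw [Measure.restrict_univ]
    _ ≤ ∫⁻ a in (ball x (r 0))ᶜ ∪ ({x} ∪ ⋃ n, A n), ENNReal.ofReal (1 / dist x a) ∂μ :=
        lintegral_mono_set hcover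
    _ ≤ (∫⁻ a in (ball x (r 0))ᶜ, ENNReal.ofReal (1 / dist x a) ∂μ) +
        ((∫⁻ a in {x}, ENNReal.ofReal (1 / dist x a) ∂μ) +
         ∫⁻ a in ⋃ n, A n, ENNReal.ofReal (1 / dist x a) ∂μ) := by
        refine le_trans (lintegral_union_le _ _ _) ?_
        gcongr
        exact lintegral_union_le _ _ _
    _ ≤ ENNReal.ofReal (r 0)⁻¹ + (0 + ∑' n, ∫⁻ a in A n, ENNReal.ofReal (1 / dist x a) ∂μ) := by
        gcongr
        · calc ∫⁻ a in (ball x (r 0))ᶜ, ENNReal.ofReal (1 / dist x a) ∂μ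
              ≤ ∫⁻ _ in (ball x (r 0))ᶜ, ENNReal.ofReal (r 0)⁻¹ ∂μ := by
                refine setLIntegral_mono measurable_const (fun a ha => ?_)
                refine ENNReal.ofReal_le_ofReal ?_
                rw [one_div]
                have : r 0 ≤ dist x a := by
                  rw [Set.mem_compl_iff, mem_ball'] at ha
                  exact not_lt.mp ha
                exact inv_anti₀ (hr0 0) this
            _ = ENNReal.ofReal (r 0)⁻¹ * μ (ball x (r 0))ᶜ := setLIntegral_const _ _
            _ ≤ ENNReal.ofReal (r 0)⁻¹ * 1 := by gcongr; exact prob_le_one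
            _ = ENNReal.ofReal (r 0)⁻¹ := mul_one _
        · rw [Measure.restrict_eq_zero.mpr (measure_mono_null (by simp) hx0),
            lintegral_zero_measure]
        · exact lintegral_iUnion_le _ _
    _ ≤ ENNReal.ofReal (r 0)⁻¹ +
        (0 + ∑' n : ℕ, ENNReal.ofReal ((2:ℝ) ^ c * ρ₁ ^ (c - 1)) * ENNReal.ofReal q ^ n) := by
        gcongr with n
        exact hterm n
    _ < ⊤ := by
        rw [ENNReal.tsum_mul_left, ENNReal.tsum_geometric]
        have hQ1 : ENNReal.ofReal q < 1 := ENNReal.ofReal_lt_one.mpr hq1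
        have : (1 - ENNReal.ofReal q)⁻¹ ≠ ⊤ :=
          ENNReal.inv_ne_top.mpr (tsub_pos_of_lt hQ1).ne'
        refine ENNReal.add_lt_top.mpr ⟨ENNReal.ofReal_lt_top, ?_⟩
        refine ENNReal.add_lt_top.mpr ⟨by simp, ?_⟩
        exact ENNReal.mul_lt_top ENNReal.ofReal_lt_top this.lt_top
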